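/- arXiv:2305.16945 — 4 statements merged into one kernel-verified Lean document; each statement's English description precedes it below -/
import Mathlib

section
/- (LTS upper bound) For any positive sub-stochastic policy p and any node n* (a list over 𝒶), the set N̄(n*) = {n ∈ List 𝒶 : d(n)/π(n) ≤ d(n*)/π(n*)} of nodes whose cost is at most that of n* is finite, and its cardinality satisfies |N̄(n*)| ≤ 1 + d(n*)/π(n*). -/
/-- The probability `π(n)` of a node (a list of actions), given a conditional
policy `p`. -/
noncomputable def nodeProb {α : Type*} (p : List α → α → ℝ) (n : List α) : ℝ :=
  ∏ j : Fin n.length, p (n.take j) (n.get j)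


lemma nodeProb_nil {α : Type*} (p : List α → α → ℝ) : nodeProb p [] = 1 := by
  simp [nodeProb]

lemma nodeProb_cons {α : Type*} (p : List α → α → ℝ) (a : α) (t : List α) :
    nodeProb p (a :: t) = p [] a * nodeProb (fun n b => p (a :: n) b) t := by
  show (∏ j : Fin (t.length + 1), p ((a :: t).take j) ((a :: t).get j)) = _
  rw [Fin.prod_univ_succ]
  simp [nodeProb]

lemma nodeProb_pos {α : Type*} (p : List α → α → ℝ) (hpos : ∀ n a, 0 < p n a)
    (n : List α) : 0 < nodeProb p n :=
  Finset.prod_pos fun j _ => hpos _ _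

lemma nodeProb_le_one {α : Type*} [Fintype α] (p : List α → α → ℝ)
    (hpos : ∀ n a, 0 < p n a) (hsub : ∀ n, ∑ a : α, p n a ≤ 1)
    (n : List α) : nodeProb p n ≤ 1 := by
  apply Finset.prod_le_one
  · intro j _; exact (hpos _ _).le
  · intro j _
    calc p (n.take j) (n.get j) ≤ ∑ a : α, p (n.take j) a :=
          Finset.single_le_sum (f := fun a => p (n.take j) a)
            (fun a _ => (hpos _ _).le) (Finset.mem_univ _)
      _ ≤ 1 := hsub _

lemma finite_length_le {α : Type*} [Fintype α] (D : ℕ) :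
    {t : List α | t.length ≤ D}.Finite := by
  induction D with
  | zero =>
    apply Set.Finite.subset (Set.finite_singleton ([] : List α))
    intro t ht
    simp only [Set.mem_setOf_eq, Nat.le_zero, List.length_eq_zero_iff] at ht
    simp [ht]
  | succ D ih =>
    apply Set.Finite.subset
      (Set.Finite.insert ([] : List α)
        (Set.finite_iUnion (fun a : α => ih.image (a :: ·))))
    intro t ht
    simp only [Set.mem_setOf_eq] at ht
    match t with
    | [] => exact Set.mem_insert _ _
    | a :: t =>
      refine Set.mem_insert_iff.mpr (Or.inr ?_)
      exact Set.mem_iUnion.mpr ⟨a, ⟨t, by simpa using ht, rfl⟩⟩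

lemma ncard_biUnion_le' {β ι : Type*} (s : Finset ι) (f : ι → Set β) :
    (⋃ i ∈ s, f i).ncard ≤ ∑ i ∈ s, (f i).ncard := by
  classical
  induction s using Finset.induction with
  | empty => simp
  | @insert a s hnot ih =>
    rw [Finset.set_biUnion_insert, Finset.sum_insert hnot]
    exact (Set.ncard_union_le _ _).trans (by omega)

lemma lts_key {α : Type*} [Fintype α] :
    ∀ (D : ℕ) (p : List α → α → ℝ), (∀ n a, 0 < p n a) → (∀ n, ∑ a : α, p n a ≤ 1) →
    ∀ (C k : ℝ), 0 ≤ k → k ≤ C →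
    (∀ t : List α, k + t.length ≤ C * nodeProb p t → t.length ≤ D) →
    ({t : List α | k + t.length ≤ C * nodeProb p t}.ncard : ℝ) ≤ 1 + C - k := by
  intro D
  induction D with
  | zero =>
    intro p hpos hsub C k hk hkC hD
    have hsub1 : {t : List α | k + t.length ≤ C * nodeProb p t} ⊆ {([] : List α)} := by
      intro t ht
      have := hD t ht
      simp only [Nat.le_zero, List.length_eq_zero_iff] at this
      simp [this]
    have : ({t : List α | k + t.length ≤ C * nodeProb p t}.ncard : ℝ) ≤ 1 := by
      have h1 := Set.ncard_le_ncard hsub1 (Set.finite_singleton _)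
      rw [Set.ncard_singleton] at h1
      exact_mod_cast h1
    linarith
  | succ D ih =>
    intro p hpos hsub C k hk hkC hD
    classical
    set S := {t : List α | k + t.length ≤ C * nodeProb p t} with hSdef
    set Sa := fun a : α => {t : List α |
      (k + 1) + t.length ≤ (C * p [] a) * nodeProb (fun n b => p (a :: n) b) t} with hSadef
    have hmem : ∀ (a : α) (t : List α), a :: t ∈ S ↔ t ∈ Sa a := by
      intro a t
      simp only [hSdef, hSadef, Set.mem_setOf_eq, nodeProb_cons, List.length_cons]
      push_cast
      constructor <;> intro h <;> nlinarith [h]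
    have hSeq : S = insert ([] : List α) (⋃ a : α, (a :: ·) '' Sa a) := by
      ext t
      constructor
      · intro ht
        match t with
        | [] => exact Set.mem_insert _ _
        | a :: t =>
          refine Set.mem_insert_iff.mpr (Or.inr ?_)
          exact Set.mem_iUnion.mpr ⟨a, ⟨t, (hmem a t).mp ht, rfl⟩⟩
      · intro ht
        rcases Set.mem_insert_iff.mp ht with h | h
        · subst h
          simp only [hSdef, Set.mem_setOf_eq, nodeProb_nil, List.length_nil]
          push_cast; linarith
        · rcases Set.mem_iUnion.mp h with ⟨a, t', ht', rfl⟩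
          exact (hmem a t').mpr ht'
    -- each Sa a is finite
    have hSafin : ∀ a : α, (Sa a).Finite := by
      intro a
      apply Set.Finite.subset (finite_length_le (α := α) D)
      intro t ht
      have h2 := hD (a :: t) ((hmem a t).mpr ht)
      simpa using Nat.lt_succ_iff.mp (Nat.lt_of_lt_of_le (Nat.lt_succ_self _)
        (by simpa using Nat.succ_le_succ (Nat.le_of_succ_le_succ (by simpa using h2))))
    -- cardinality bound per a
    have hcard_a : ∀ a : α, ((Sa a).ncard : ℝ) ≤
        if k + 1 ≤ C * p [] a then C * p [] a - k else 0 := by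
      intro a
      by_cases hca : k + 1 ≤ C * p [] a
      · rw [if_pos hca]
        have := ih (fun n b => p (a :: n) b) (fun n b => hpos _ _) (fun n => hsub _)
          (C * p [] a) (k + 1) (by linarith) hca
          (by
            intro t ht
            have h2 := hD (a :: t) ((hmem a t).mpr ht)
            simpa using Nat.le_of_succ_le_succ (by simpa using h2))
        linarith
      · rw [if_neg hca]
        have : Sa a = ∅ := by
          ext t
          simp only [hSadef, Set.mem_setOf_eq, Set.mem_empty_iff_false, iff_false]
          intro ht
          have hπpos : 0 < nodeProb (fun n b => p (a :: n) b) t :=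
            nodeProb_pos _ (fun n b => hpos _ _) t
          have hπle : nodeProb (fun n b => p (a :: n) b) t ≤ 1 :=
            nodeProb_le_one (fun n b => p (a :: n) b) (fun n b => hpos _ _)
              (fun n => hsub _) t
          have hCpos : 0 < C * p [] a := by nlinarith [ht, hπpos, Nat.cast_nonneg (α := ℝ) t.length]
          nlinarith [ht]
        simp [this]
    -- total bound
    have hfinS : S.Finite := by
      rw [hSeq]
      exact Set.Finite.insert _ (Set.finite_iUnion fun a => (hSafin a).image _)
    have hstep1 : S.ncard ≤ (⋃ a : α, (a :: ·) '' Sa a).ncard + 1 := by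
      rw [hSeq]; exact Set.ncard_insert_le _ _
    have hstep2 : (⋃ a : α, (a :: ·) '' Sa a).ncard ≤ ∑ a : α, ((a :: ·) '' Sa a).ncard := by
      rw [← Set.biUnion_univ]
      simpa using ncard_biUnion_le' (Finset.univ : Finset α) (fun a => (a :: ·) '' Sa a)
    have hstep3 : ∀ a : α, ((a :: ·) '' Sa a).ncard = (Sa a).ncard := by
      intro a
      exact Set.ncard_image_of_injOn (fun x _ y _ h => by simpa using h)
    have hsum : (∑ a : α, ((Sa a).ncard : ℝ)) ≤ C - k := by
      have h1 : (∑ a : α, ((Sa a).ncard : ℝ)) ≤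
          ∑ a : α, (if k + 1 ≤ C * p [] a then C * p [] a - k else 0) :=
        Finset.sum_le_sum fun a _ => hcard_a a
      rw [Finset.sum_ite, Finset.sum_const_zero, add_zero] at h1
      set A' := Finset.filter (fun a : α => k + 1 ≤ C * p [] a) Finset.univ with hA'
      by_cases hA'e : A' = ∅
      · rw [hA'e] at h1
        simp at h1
        linarith
      · have hcard1 : 1 ≤ A'.card := Finset.card_pos.mpr (Finset.nonempty_of_ne_empty hA'e)
        have hsum2 : ∑ a ∈ A', (C * p [] a - k) = C * (∑ a ∈ A', p [] a) - k * A'.card := by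
          rw [Finset.sum_sub_distrib, ← Finset.mul_sum]
          simp [mul_comm]
        have hple : (∑ a ∈ A', p [] a) ≤ 1 := by
          refine le_trans ?_ (hsub [])
          exact Finset.sum_le_sum_of_subset_of_nonneg (Finset.subset_univ _)
            (fun a _ _ => (hpos _ _).le)
        have hC0 : 0 ≤ C := le_trans hk hkC
        have : C * (∑ a ∈ A', p [] a) - k * A'.card ≤ C - k := by
          have h3 : C * (∑ a ∈ A', p [] a) ≤ C := by nlinarith
          have h4 : k ≤ k * A'.card := by
            have : (1 : ℝ) ≤ A'.card := by exact_mod_cast hcard1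
            nlinarith
          linarith
        calc (∑ a : α, ((Sa a).ncard : ℝ)) ≤ ∑ a ∈ A', (C * p [] a - k) := h1
          _ = C * (∑ a ∈ A', p [] a) - k * A'.card := hsum2
          _ ≤ C - k := this
    have hnat : (S.ncard : ℝ) ≤ (∑ a : α, ((Sa a).ncard : ℝ)) + 1 := by
      have : S.ncard ≤ (∑ a : α, (Sa a).ncard) + 1 := by
        calc S.ncard ≤ (⋃ a : α, (a :: ·) '' Sa a).ncard + 1 := hstep1
          _ ≤ (∑ a : α, ((a :: ·) '' Sa a).ncard) + 1 := by omega
          _ = (∑ a : α, (Sa a).ncard) + 1 := by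
              congr 1
              exact Finset.sum_congr rfl fun a _ => hstep3 a
      exact_mod_cast this
    linarith

/-- (LTS upper bound) For any positive sub-stochastic policy `p` and any node
`n*`, the set of nodes whose cost `d(n)/π(n)` is at most that of `n*` is
finite, with cardinality at most `1 + d(n*)/π(n*)`. -/
theorem lts_upper_bound {α : Type*} [Fintype α] [Nonempty α]
    (p : List α → α → ℝ)
    (hpos : ∀ n a, 0 < p n a)
    (hsub : ∀ n, ∑ a : α, p n a ≤ 1)
    (nstar : List α) :
    {n : List α | (n.length : ℝ) / nodeProb p n
        ≤ (nstar.length : ℝ) / nodeProb p nstar}.Finite ∧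
    (({n : List α | (n.length : ℝ) / nodeProb p n
        ≤ (nstar.length : ℝ) / nodeProb p nstar}.ncard : ℝ)
      ≤ 1 + (nstar.length : ℝ) / nodeProb p nstar) := by
  have hπs : 0 < nodeProb p nstar := nodeProb_pos p hpos nstar
  set C : ℝ := (nstar.length : ℝ) / nodeProb p nstar with hC
  have hC0 : 0 ≤ C := div_nonneg (Nat.cast_nonneg _) hπs.le
  have hset : {n : List α | (n.length : ℝ) / nodeProb p n ≤ C}
      = {t : List α | (0 : ℝ) + t.length ≤ C * nodeProb p t} := by
    ext n
    simp only [Set.mem_setOf_eq, zero_add]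
    rw [div_le_iff₀ (nodeProb_pos p hpos n), mul_comm]
  have hD : ∀ t : List α, (0 : ℝ) + t.length ≤ C * nodeProb p t → t.length ≤ ⌈C⌉₊ := by
    intro t ht
    have h1 : nodeProb p t ≤ 1 := nodeProb_le_one p hpos hsub t
    have h2 : (t.length : ℝ) ≤ C := by nlinarith [nodeProb_pos p hpos t]
    exact_mod_cast h2.trans (Nat.le_ceil C)
  constructor
  · rw [hset]
    apply Set.Finite.subset (finite_length_le (α := α) ⌈C⌉₊)
    intro t ht
    exact hD t ht
  · rw [hset]
    have := lts_key ⌈C⌉₊ p hpos hsub C 0 le_rfl hC0 hD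
    linarith
end

section
/- (Log loss to inverse loss convexity) Let ι and K be finite types, g : ι → K a grouping of the indices, and f : ι → (Fin m → ℝ) → ℝ a family of functions such that f i x > 0 for every i ∈ ι and every x ∈ ℝ^m, and such that for every i the function x ↦ −log(f i x) is convex on ℝ^m. Then the function L(x) = Σ_{k ∈ K} ( ∏_{i : g i = k} f i x )⁻¹ is convex on ℝ^m. -/
open Finset

/-!
Since `(∏ fᵢ)⁻¹ = exp (∑ -log fᵢ)` for positive `fᵢ`, each summand of `L` is the increasing
convex function `exp` applied to a sum of convex functions, hence convex.
-/

theorem ConvexOn.finset_sum {𝕜 E β ι : Type*} [Semiring 𝕜] [PartialOrder 𝕜] [AddCommMonoid E]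
    [AddCommMonoid β] [PartialOrder β] [IsOrderedAddMonoid β] [SMul 𝕜 E] [Module 𝕜 β]
    {s : Set E} (hs : Convex 𝕜 s) (t : Finset ι) {f : ι → E → β}
    (hf : ∀ i ∈ t, ConvexOn 𝕜 s (f i)) : ConvexOn 𝕜 s fun x => ∑ i ∈ t, f i x := by
  induction t using Finset.cons_induction with
  | empty => simpa using convexOn_const 0 hs
  | cons i t _ ih =>
    simp only [sum_cons]
    exact (hf i (mem_cons_self i t)).add (ih fun j hj => hf j (mem_cons_of_mem hj))

theorem ConvexOn.exp {E : Type*} [AddCommMonoid E] [Module ℝ E] {s : Set E} {f : E → ℝ}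
    (hf : ConvexOn ℝ s f) : ConvexOn ℝ s fun x => Real.exp (f x) :=
  ⟨hf.1, fun _ hx _ hy _ _ ha hb hab =>
    (Real.exp_le_exp.2 (hf.2 hx hy ha hb hab)).trans
      (convexOn_exp.2 (Set.mem_univ _) (Set.mem_univ _) ha hb hab)⟩

theorem inv_prod_eq_exp_sum_neg_log {ι : Type*} (t : Finset ι) {a : ι → ℝ}
    (ha : ∀ i ∈ t, 0 < a i) : (∏ i ∈ t, a i)⁻¹ = Real.exp (∑ i ∈ t, -Real.log (a i)) := by
  rw [sum_neg_distrib, Real.exp_neg, Real.exp_sum,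
    prod_congr rfl fun i hi => Real.exp_log (ha i hi)]

/-- (Log loss to inverse loss convexity) If each `fᵢ` is positive and has
convex log loss `x ↦ −log(fᵢ x)`, then
`L(x) = Σ_k (∏_{i : g i = k} fᵢ x)⁻¹` is convex. -/
theorem logloss_to_inverseloss_convexity {m : ℕ} {ι K : Type*}
    [Fintype ι] [Fintype K] [DecidableEq K]
    (g : ι → K) (f : ι → (Fin m → ℝ) → ℝ)
    (hpos : ∀ i (x : Fin m → ℝ), 0 < f i x)
    (hconv : ∀ i, ConvexOn ℝ Set.univ (fun x : Fin m → ℝ => -Real.log (f i x))) :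
    ConvexOn ℝ Set.univ (fun x : Fin m → ℝ =>
      ∑ k : K, (∏ i ∈ Finset.univ.filter (fun i => g i = k), f i x)⁻¹) := by
  simp_rw [inv_prod_eq_exp_sum_neg_log _ fun i _ => hpos i _]
  exact ConvexOn.finset_sum convex_univ _ fun k _ =>
    (ConvexOn.finset_sum convex_univ _ fun i _ => hconv i).exp
end

section
/- Let ι and K be finite types, g : ι → K a grouping of the indices, and f : ι → (Fin m → ℝ) → ℝ a family of functions such that f i x > 0 for every i ∈ ι and every x ∈ ℝ^m, and such that for every i the function x ↦ −log(f i x) is convex on ℝ^m. Then the function x ↦ log( Σ_{k ∈ K} ( ∏_{i : g i = k} f i x )⁻¹ ) is convex on ℝ^m, provided K is nonempty (so that the sum is positive and the logarithm is defined). -/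
/-!
Each summand `(∏_{g i = k} f i)⁻¹` is log-convex, since its logarithm is the sum of the convex
functions `-log (f i)`. A finite sum of log-convex functions is again log-convex: log-convexity
gives `φ (a x + b y) ≤ φ x ^ a * φ y ^ b` termwise, and Hölder's inequality with exponents
`1/a`, `1/b` bounds `∑ φₖ x ^ a * φₖ y ^ b` by `(∑ φₖ x) ^ a * (∑ φₖ y) ^ b`.
-/

open Real Finset

theorem ConvexOn.sum {𝕜 E β ι : Type*} [Semiring 𝕜] [PartialOrder 𝕜] [AddCommMonoid E]
    [AddCommMonoid β] [PartialOrder β] [IsOrderedAddMonoid β] [Module 𝕜 E] [Module 𝕜 β]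
    {s : Set E} (hs : Convex 𝕜 s) {t : Finset ι} {φ : ι → E → β}
    (hφ : ∀ i ∈ t, ConvexOn 𝕜 s (φ i)) :
    ConvexOn 𝕜 s (∑ i ∈ t, φ i) :=
  Finset.sum_induction φ (ConvexOn 𝕜 s) (fun _ _ => ConvexOn.add) (convexOn_const 0 hs) hφ

theorem Real.sum_rpow_mul_rpow_le {ι : Type*} (s : Finset ι) {u v : ι → ℝ}
    (hu : ∀ i ∈ s, 0 ≤ u i) (hv : ∀ i ∈ s, 0 ≤ v i) {a b : ℝ} (ha : 0 < a) (hb : 0 < b)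
    (hab : a + b = 1) :
    ∑ i ∈ s, u i ^ a * v i ^ b ≤ (∑ i ∈ s, u i) ^ a * (∑ i ∈ s, v i) ^ b := by
  have holder := inner_le_Lp_mul_Lq_of_nonneg s (HolderConjugate.inv_inv ha hb hab)
    (fun i hi => rpow_nonneg (hu i hi) a) (fun i hi => rpow_nonneg (hv i hi) b)
  have hu' : ∑ i ∈ s, (u i ^ a) ^ a⁻¹ = ∑ i ∈ s, u i :=
    sum_congr rfl fun i hi => rpow_rpow_inv (hu i hi) ha.ne'
  have hv' : ∑ i ∈ s, (v i ^ b) ^ b⁻¹ = ∑ i ∈ s, v i :=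
    sum_congr rfl fun i hi => rpow_rpow_inv (hv i hi) hb.ne'
  simpa only [hu', hv', one_div, inv_inv] using holder

theorem ConvexOn.log_sum {E ι : Type*} [AddCommGroup E] [Module ℝ E] {s : Set E}
    {t : Finset ι} (ht : t.Nonempty) {φ : ι → E → ℝ} (hpos : ∀ i ∈ t, ∀ x ∈ s, 0 < φ i x)
    (hφ : ∀ i ∈ t, ConvexOn ℝ s (fun x => log (φ i x))) :
    ConvexOn ℝ s (fun x => log (∑ i ∈ t, φ i x)) := by
  obtain ⟨i₀, hi₀⟩ := ht
  refine convexOn_iff_forall_pos.2 ⟨(hφ i₀ hi₀).1, fun x hx y hy a b ha hb hab => ?_⟩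
  have hsum_pos : ∀ z ∈ s, 0 < ∑ i ∈ t, φ i z := fun z hz =>
    sum_pos (fun i hi => hpos i hi z hz) ⟨i₀, hi₀⟩
  have hz : a • x + b • y ∈ s := (hφ i₀ hi₀).1 hx hy ha.le hb.le hab
  have termwise : ∀ i ∈ t, φ i (a • x + b • y) ≤ φ i x ^ a * φ i y ^ b := fun i hi => by
    have hx' := hpos i hi x hx
    have hy' := hpos i hi y hy
    rw [← log_le_log_iff (hpos i hi _ hz) (by positivity), log_mul (by positivity) (by positivity),
      log_rpow hx', log_rpow hy']
    exact (hφ i hi).2 hx hy ha.le hb.le hab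
  calc log (∑ i ∈ t, φ i (a • x + b • y))
      ≤ log ((∑ i ∈ t, φ i x) ^ a * (∑ i ∈ t, φ i y) ^ b) := by
        refine log_le_log (hsum_pos _ hz) ((sum_le_sum termwise).trans ?_)
        exact sum_rpow_mul_rpow_le t (fun i hi => (hpos i hi x hx).le)
          (fun i hi => (hpos i hi y hy).le) ha hb hab
    _ = a • log (∑ i ∈ t, φ i x) + b • log (∑ i ∈ t, φ i y) := by
        have hX := hsum_pos x hx
        have hY := hsum_pos y hy
        rw [log_mul (by positivity) (by positivity), log_rpow hX, log_rpow hY, smul_eq_mul,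
          smul_eq_mul]

/-- If each `fᵢ` is positive and has convex log loss `x ↦ −log(fᵢ x)`, then
the logarithm of the LTS loss,
`x ↦ log( Σ_k (∏_{i : g i = k} fᵢ x)⁻¹ )`, is convex (with `K` nonempty). -/
theorem log_of_lts_loss_convex {m : ℕ} {ι K : Type*}
    [Fintype ι] [Fintype K] [DecidableEq K] [Nonempty K]
    (g : ι → K) (f : ι → (Fin m → ℝ) → ℝ)
    (hpos : ∀ i (x : Fin m → ℝ), 0 < f i x)
    (hconv : ∀ i, ConvexOn ℝ Set.univ (fun x : Fin m → ℝ => -Real.log (f i x))) :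
    ConvexOn ℝ Set.univ (fun x : Fin m → ℝ =>
      Real.log (∑ k : K, (∏ i ∈ Finset.univ.filter (fun i => g i = k), f i x)⁻¹)) := by
  refine ConvexOn.log_sum univ_nonempty
    (fun k _ x _ => inv_pos.2 (prod_pos fun i _ => hpos i x)) fun k _ => ?_
  have log_summand : (fun x => log (∏ i ∈ univ.filter (g · = k), f i x)⁻¹) =
      ∑ i ∈ univ.filter (g · = k), fun x => -log (f i x) := by
    ext x
    rw [log_inv, log_prod fun i _ => (hpos i x).ne', Finset.sum_apply, sum_neg_distrib]
  rw [log_summand]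
  exact ConvexOn.sum convex_univ fun i _ => hconv i
end

section
/- (Convexity of the LTS loss for context models) Let Q (contexts) and 𝒶 (actions) be finite types and let the parameter space be β : Q × 𝒶 → ℝ. Let K be a finite type (solution trajectories); for each k ∈ K let d_k ∈ ℕ be its length, w_k > 0 a real weight, and for each step j ∈ Fin d_k let Q_{k,j} ⊆ Q be a finite set of active contexts, A_{k,j} ⊆ 𝒶 a nonempty finite set of available actions, and a_{k,j} ∈ 𝒶 the chosen action. Then the LTS loss L(β) = Σ_{k∈K} w_k · ∏_{j ∈ Fin d_k} Σ_{a' ∈ A_{k,j}} exp( Σ_{c ∈ Q_{k,j}} ( β(c, a') − β(c, a_{k,j}) ) ) is a convex function of β on all of ℝ^{Q×𝒶}. -/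
private lemma convexOn_finset_sum {E ι : Type*} [AddCommGroup E] [Module ℝ E]
    (t : Finset ι) (f : ι → E → ℝ) (hf : ∀ i ∈ t, ConvexOn ℝ Set.univ (f i)) :
    ConvexOn ℝ Set.univ (fun x => ∑ i ∈ t, f i x) := by
  classical
  induction t using Finset.induction_on with
  | empty => simpa using convexOn_const (0 : ℝ) convex_univ
  | @insert a s hnotmem ih =>
      simp only [Finset.sum_insert hnotmem]
      exact (hf a (Finset.mem_insert_self a s)).add
        (ih fun i hi => hf i (Finset.mem_insert_of_mem hi))

private lemma convexOn_exp_linear' {E : Type*} [AddCommGroup E] [Module ℝ E]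
    (g : E → ℝ) (hadd : ∀ x y, g (x + y) = g x + g y)
    (hsmul : ∀ (c : ℝ) x, g (c • x) = c * g x) :
    ConvexOn ℝ Set.univ (fun x => Real.exp (g x)) := by
  refine ⟨convex_univ, fun x _ y _ a b ha hb hab => ?_⟩
  have h := convexOn_exp.2 (Set.mem_univ (g x)) (Set.mem_univ (g y)) ha hb hab
  simpa [hadd, hsmul, smul_eq_mul] using h

/-- (Convexity of the LTS loss for context models) The LTS loss
`L(β) = Σ_k w_k · ∏_j Σ_{a' ∈ A_{k,j}} exp( Σ_{c ∈ Q_{k,j}} (β(c,a') − β(c,a_{k,j})) )`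
is convex in the parameters `β : Q × 𝒶 → ℝ`. -/
theorem lts_loss_convex_context_models {Q A K : Type*}
    [Fintype Q] [Fintype A] [Fintype K]
    (d : K → ℕ) (w : K → ℝ) (hw : ∀ k, 0 < w k)
    (Qs : (k : K) → Fin (d k) → Finset Q)
    (As : (k : K) → Fin (d k) → Finset A)
    (hAs : ∀ k (j : Fin (d k)), (As k j).Nonempty)
    (act : (k : K) → Fin (d k) → A) :
    ConvexOn ℝ Set.univ (fun β : Q × A → ℝ =>
      ∑ k : K, w k * ∏ j : Fin (d k), ∑ a' ∈ As k j,
        Real.exp (∑ c ∈ Qs k j, (β (c, a') - β (c, act k j)))) := by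
  classical
  have key : ∀ k : K, ConvexOn ℝ Set.univ (fun β : Q × A → ℝ =>
      ∏ j : Fin (d k), ∑ a' ∈ As k j,
        Real.exp (∑ c ∈ Qs k j, (β (c, a') - β (c, act k j)))) := by
    intro k
    have hrw : (fun β : Q × A → ℝ =>
        ∏ j : Fin (d k), ∑ a' ∈ As k j,
          Real.exp (∑ c ∈ Qs k j, (β (c, a') - β (c, act k j)))) =
        fun β : Q × A → ℝ => ∑ p ∈ Fintype.piFinset (As k),
          Real.exp (∑ j : Fin (d k), ∑ c ∈ Qs k j, (β (c, p j) - β (c, act k j))) := by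
      funext β
      rw [Finset.prod_univ_sum]
      exact Finset.sum_congr rfl fun p _ => (Real.exp_sum _ _).symm
    rw [hrw]
    apply convexOn_finset_sum
    intro p _
    refine convexOn_exp_linear' _ ?_ ?_
    · intro x y
      simp only [Pi.add_apply]
      rw [← Finset.sum_add_distrib]
      refine Finset.sum_congr rfl fun j _ => ?_
      rw [← Finset.sum_add_distrib]
      exact Finset.sum_congr rfl fun c _ => by ring
    · intro m x
      simp only [Pi.smul_apply, smul_eq_mul, Finset.mul_sum, mul_sub]
  apply convexOn_finset_sum
  intro k _
  simpa [smul_eq_mul] using (key k).smul (le_of_lt (hw k))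
end
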